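/- Let X be a Hausdorff uniform space and μ ∈ M⁺(X) a positive continuous linear functional on UCb(X). Then the Fourier transform Fμ is a bounded uniformly continuous function on X^∇ (the space UC(X,ℝ) with the uniform structure of pointwise convergence) if and only if the real part Re(Fμ) is continuous at the zero function 0 ∈ X^∇. -/

import Mathlib

open Complex

noncomputable section

/-- The function `t ↦ e^{it}` is uniformly continuous on `ℝ`. -/
lemma uniformContinuous_exp_mul_I :
    UniformContinuous fun t : ℝ => Complex.exp (t * Complex.I) := by
  rw [Metric.uniformContinuous_iff]
  intro ε hε
  refine ⟨min 1 (ε / 2), by positivity, fun {a b} h => ?_⟩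
  have hab1 : |a - b| ≤ 1 := by
    have := (lt_min_iff.mp (by simpa [Real.dist_eq] using h)).1
    linarith [abs_nonneg (a - b), this]
  have key : ‖Complex.exp ((↑(a - b)) * Complex.I) - 1‖ ≤ 2 * |a - b| := by
    have h1 : ‖(↑(a - b) : ℂ) * Complex.I‖ = |a - b| := by
      rw [norm_mul, Complex.norm_I, mul_one, Complex.norm_real, Real.norm_eq_abs]
    have h2 := Complex.norm_exp_sub_one_le (x := (↑(a - b)) * Complex.I)
      (by rw [h1]; exact hab1)
    rw [h1] at h2
    exact h2
  have hfactor : Complex.exp (↑a * Complex.I) - Complex.exp (↑b * Complex.I)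
      = Complex.exp (↑b * Complex.I) * (Complex.exp ((↑(a - b)) * Complex.I) - 1) := by
    rw [mul_sub, mul_one, ← Complex.exp_add]
    push_cast
    ring_nf
  have habε : |a - b| < ε / 2 := by
    have := (lt_min_iff.mp (by simpa [Real.dist_eq] using h)).2
    exact this
  calc dist (Complex.exp (↑a * Complex.I)) (Complex.exp (↑b * Complex.I))
      = ‖Complex.exp (↑a * Complex.I) - Complex.exp (↑b * Complex.I)‖ := by
        rw [Complex.dist_eq]
    _ = ‖Complex.exp (↑b * Complex.I)‖ *
          ‖Complex.exp ((↑(a - b)) * Complex.I) - 1‖ := by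
        rw [hfactor, norm_mul]
    _ ≤ 2 * |a - b| := by
        rw [Complex.norm_exp_ofReal_mul_I, one_mul]; exact key
    _ < ε := by linarith

variable (X : Type*) [UniformSpace X]

/-- The space `UCb(X)` of bounded uniformly continuous complex-valued functions on a
uniform space `X`, realized as a (closed) subspace of the Banach space of bounded
continuous functions, so that it is itself a Banach space with the supremum norm. -/
def UCb : Submodule ℂ (BoundedContinuousFunction X ℂ) where
  carrier := {f | UniformContinuous f}
  add_mem' := by
    intro f g hf hg
    exact ((hf : UniformContinuous f).add (hg : UniformContinuous g))
  zero_mem' := by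
    exact (uniformContinuous_const : UniformContinuous fun _ : X => (0 : ℂ))
  smul_mem' := by
    intro c f hf
    exact ((hf : UniformContinuous f).const_smul c)

variable {X}

/-- For a uniformly continuous function `f : X → ℝ`, the element `e^{if}` of `UCb(X)`. -/
def expICf {f : X → ℝ} (hf : UniformContinuous f) : UCb X :=
  ⟨BoundedContinuousFunction.ofNormedAddCommGroup
      (fun x => Complex.exp ((f x : ℂ) * Complex.I))
      ((uniformContinuous_exp_mul_I.comp hf).continuous) 1
      (fun x => le_of_eq (Complex.norm_exp_ofReal_mul_I (f x))),
   by exact (uniformContinuous_exp_mul_I.comp hf)⟩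

/-- The constant function `1` as an element of `UCb(X)`. -/
def oneUCb : UCb X :=
  ⟨BoundedContinuousFunction.const X (1 : ℂ), by
    exact (uniformContinuous_const : UniformContinuous fun _ : X => (1 : ℂ))⟩

/-- A functional `μ ∈ M(X) = UCb(X)'` is positive if it takes nonnegative (real) values
on nonnegative real-valued functions. -/
def IsPositiveFunctional {X : Type*} [UniformSpace X] (μ : UCb X →L[ℂ] ℂ) : Prop :=
  ∀ g : UCb X, (∀ x : X, ∃ r : ℝ, 0 ≤ r ∧ (g : BoundedContinuousFunction X ℂ) x = r) →
    ∃ c : ℝ, 0 ≤ c ∧ μ g = c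

/-- The uniform space dual `X^∇ = UC(X,ℝ)`, endowed with the uniform structure of
pointwise convergence (as a uniform subspace of the product `ℝ^X`). -/
def UCdual (X : Type*) [UniformSpace X] : Type _ := {f : X → ℝ // UniformContinuous f}

instance (X : Type*) [UniformSpace X] : UniformSpace (UCdual X) :=
  instUniformSpaceSubtype

/-! A positive functional satisfies `|μ u| ≤ μ b` whenever `|u| ≤ b`. Applied to
`u = e^{if} - e^{ig}` and the AM–GM bound `|e^{ia} - e^{ib}| ≤ (1 - cos (a - b)) / (2t) + t`,
this gives `|Fμ f - Fμ g| ≤ (μ 1 - Re Fμ (f - g)) / (2t) + t μ 1` for every `t > 0`. Since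
`f - g → 0` along the uniformity of `X^∇`, continuity of `Re Fμ` at `0` makes the right-hand
side eventually smaller than any `ε`. Boundedness only needs `‖e^{if}‖ = 1`. -/

open Filter Topology Uniformity ComplexOrder

/- With `ComplexOrder`, `z ≤ w` means that `w - z` is a nonnegative real; hypotheses such as
`(‖u.1 x‖ : ℂ) ≤ b.1 x` thus also say that `b` is real-valued. -/

namespace UCb

variable {X : Type*} [UniformSpace X]

def compCLM (L : ℂ →L[ℝ] ℂ) (v : UCb X) : UCb X :=
  ⟨v.1.comp L L.lipschitz, L.uniformContinuous.comp v.2⟩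

def re (v : UCb X) : UCb X := compCLM (ofRealCLM.comp reCLM) v

def im (v : UCb X) : UCb X := compCLM (ofRealCLM.comp imCLM) v

@[simp] lemma re_apply (v : UCb X) (x : X) : (re v).1 x = ((v.1 x).re : ℂ) := rfl

@[simp] lemma im_apply (v : UCb X) (x : X) : (im v).1 x = ((v.1 x).im : ℂ) := rfl

lemma re_add_I_smul_im (v : UCb X) : re v + I • im v = v := by
  ext x
  simp [mul_comm I, re_add_im]

end UCb

@[simp] lemma oneUCb_apply {X : Type*} [UniformSpace X] (x : X) : (oneUCb : UCb X).1 x = 1 :=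
  rfl

@[simp] lemma expICf_apply {X : Type*} [UniformSpace X] {f : X → ℝ} (hf : UniformContinuous f)
    (x : X) : (expICf hf).1 x = exp (f x * I) :=
  rfl

lemma norm_expICf_le {X : Type*} [UniformSpace X] {f : X → ℝ} (hf : UniformContinuous f) :
    ‖expICf hf‖ ≤ 1 :=
  (BoundedContinuousFunction.norm_le zero_le_one).2 fun x => by
    simp [norm_exp_ofReal_mul_I]

namespace IsPositiveFunctional

variable {X : Type*} [UniformSpace X] {μ : UCb X →L[ℂ] ℂ}

lemma nonneg (hμ : IsPositiveFunctional μ) {v : UCb X} (hv : ∀ x, 0 ≤ v.1 x) : 0 ≤ μ v := by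
  obtain ⟨c, hc, hμv⟩ := hμ v fun x =>
    ⟨(v.1 x).re, (nonneg_iff.1 (hv x)).1, ext rfl (nonneg_iff.1 (hv x)).2.symm⟩
  exact hμv ▸ zero_le_real.2 hc

lemma mono (hμ : IsPositiveFunctional μ) {v w : UCb X} (hvw : ∀ x, v.1 x ≤ w.1 x) :
    μ v ≤ μ w := by
  simpa using hμ.nonneg (v := w - v) fun x => sub_nonneg.2 (hvw x)

lemma one_nonneg (hμ : IsPositiveFunctional μ) : 0 ≤ μ oneUCb :=
  hμ.nonneg fun _ => zero_le_one

/-- Bounded real functions lie above a constant, so this follows from monotonicity. -/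
lemma im_apply_eq_zero (hμ : IsPositiveFunctional μ) {v : UCb X} (hv : ∀ x, (v.1 x).im = 0) :
    (μ v).im = 0 := by
  have hle : μ ((-‖v.1‖ : ℂ) • oneUCb) ≤ μ v := hμ.mono fun x => by
    refine Complex.le_def.2 ⟨?_, by simp [hv x]⟩
    simpa using neg_le_of_abs_le ((abs_re_le_norm _).trans (v.1.norm_coe_le_norm x))
  have h1 : (μ oneUCb).im = 0 := (nonneg_iff.1 hμ.one_nonneg).2.symm
  simpa [h1] using (Complex.le_def.1 hle).2.symm

lemma apply_re (hμ : IsPositiveFunctional μ) (v : UCb X) : μ (UCb.re v) = ((μ v).re : ℂ) := by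
  have hre : (μ (UCb.re v)).im = 0 := hμ.im_apply_eq_zero fun x => by simp
  have him : (μ (UCb.im v)).im = 0 := hμ.im_apply_eq_zero fun x => by simp
  conv_rhs => rw [← UCb.re_add_I_smul_im v]
  apply Complex.ext <;> simp [hre, him]

/-- Rotate `u` so that `μ u` becomes real, then compare its real part with `b`. -/
lemma norm_apply_le (hμ : IsPositiveFunctional μ) {u b : UCb X}
    (hub : ∀ x, (‖u.1 x‖ : ℂ) ≤ b.1 x) : (‖μ u‖ : ℂ) ≤ μ b := by
  obtain ⟨c, hc, hcu⟩ : ∃ c : ℂ, ‖c‖ = 1 ∧ c * μ u = ‖μ u‖ := by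
    by_cases hz : μ u = 0
    · exact ⟨1, by simp, by simp [hz]⟩
    · refine ⟨‖μ u‖ / μ u, ?_, div_mul_cancel₀ _ hz⟩
      simp [norm_ne_zero_iff.2 hz]
  calc (‖μ u‖ : ℂ) = μ (UCb.re (c • u)) := by rw [hμ.apply_re, map_smul, smul_eq_mul, hcu]; simp
    _ ≤ μ b := hμ.mono fun x => by
      have hcx : ((c • u).1 x).re ≤ ‖u.1 x‖ := by
        simpa [hc] using re_le_norm (c * u.1 x)
      exact (UCb.re_apply (c • u) x ▸ real_le_real.2 hcx).trans (hub x)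

end IsPositiveFunctional

/-- AM–GM applied to `|e^{ia} - e^{ib}| = 2 |sin ((a - b) / 2)|` and
`1 - cos (a - b) = 2 sin² ((a - b) / 2)`. -/
lemma norm_exp_mul_I_sub_exp_mul_I_le (a b : ℝ) {t : ℝ} (ht : 0 < t) :
    ‖exp (a * I) - exp (b * I)‖ ≤ (2 * t)⁻¹ * (1 - Real.cos (a - b)) + t := by
  have hfac : exp (a * I) - exp (b * I) = exp (b * I) * (exp (I * ↑(a - b)) - 1) := by
    rw [mul_sub, mul_one, ← Complex.exp_add]
    push_cast
    ring_nf
  have hcos : Real.cos (a - b) = 1 - 2 * Real.sin ((a - b) / 2) ^ 2 := by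
    have hdouble := Real.cos_two_mul ((a - b) / 2)
    rw [mul_div_cancel₀ _ two_ne_zero] at hdouble
    linarith [Real.sin_sq_add_cos_sq ((a - b) / 2)]
  rw [hfac, norm_mul, norm_exp_ofReal_mul_I, one_mul, norm_exp_I_mul_ofReal_sub_one, norm_mul,
    Real.norm_ofNat, Real.norm_eq_abs, hcos, ← sq_abs (Real.sin _)]
  set s := |Real.sin ((a - b) / 2)|
  field_simp
  nlinarith [sq_nonneg (s - t)]

namespace UCdual

variable {X : Type*} [UniformSpace X]

instance : Zero (UCdual X) := ⟨⟨0, uniformContinuous_const⟩⟩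

instance : Sub (UCdual X) := ⟨fun f g => ⟨f.1 - g.1, f.2.sub g.2⟩⟩

@[simp] lemma val_zero : (0 : UCdual X).1 = 0 := rfl

@[simp] lemma val_sub (f g : UCdual X) : (f - g).1 = f.1 - g.1 := rfl

lemma tendsto_sub_uniformity :
    Tendsto (fun p : UCdual X × UCdual X => p.1 - p.2) (𝓤 (UCdual X)) (𝓝 0) := by
  refine tendsto_subtype_rng.2 ?_
  change Tendsto ((fun q : (X → ℝ) × (X → ℝ) => q.1 - q.2) ∘ fun p : UCdual X × UCdual X =>
    (p.1.1, p.2.1)) (comap (fun p : UCdual X × UCdual X => (p.1.1, p.2.1)) (𝓤 (X → ℝ))) (𝓝 0)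
  rw [uniformity_eq_comap_nhds_zero_swapped]
  exact tendsto_comap.comp tendsto_comap

end UCdual

section FourierTransform

variable {X : Type*} [UniformSpace X]

def fourierTransform (μ : UCb X →L[ℂ] ℂ) (f : UCdual X) : ℂ := μ (expICf f.2)

lemma fourierTransform_zero (μ : UCb X →L[ℂ] ℂ) : fourierTransform μ 0 = μ oneUCb := by
  refine congrArg μ (Subtype.ext (BoundedContinuousFunction.ext fun x => ?_))
  simp

lemma norm_fourierTransform_le (μ : UCb X →L[ℂ] ℂ) (f : UCdual X) :
    ‖fourierTransform μ f‖ ≤ ‖μ‖ :=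
  (μ.le_opNorm _).trans (mul_le_of_le_one_right (norm_nonneg μ) (norm_expICf_le f.2))

namespace IsPositiveFunctional

variable {μ : UCb X →L[ℂ] ℂ}

lemma norm_fourierTransform_sub_le (hμ : IsPositiveFunctional μ) (f g : UCdual X) {t : ℝ}
    (ht : 0 < t) : ‖fourierTransform μ f - fourierTransform μ g‖ ≤
      (2 * t)⁻¹ * ((μ oneUCb).re - (fourierTransform μ (f - g)).re) + t * (μ oneUCb).re := by
  set b : UCb X :=
    (((2 * t)⁻¹ : ℝ) : ℂ) • (oneUCb - UCb.re (expICf (f - g).2)) + (t : ℂ) • oneUCb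
  have hb : ∀ x, (‖(expICf f.2 - expICf g.2).1 x‖ : ℂ) ≤ b.1 x := fun x => by
    have hbx : b.1 x = (((2 * t)⁻¹ * (1 - Real.cos (f.1 x - g.1 x)) + t : ℝ) : ℂ) := by
      simp only [b, Submodule.coe_add, SetLike.val_smul, AddSubgroupClass.coe_sub,
        BoundedContinuousFunction.coe_add, BoundedContinuousFunction.coe_smul,
        BoundedContinuousFunction.coe_sub, Pi.add_apply, Pi.sub_apply, oneUCb_apply,
        UCb.re_apply, expICf_apply, UCdual.val_sub, exp_ofReal_mul_I_re, smul_eq_mul]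
      push_cast
      ring
    rw [hbx, real_le_real]
    simpa using norm_exp_mul_I_sub_exp_mul_I_le (f.1 x) (g.1 x) ht
  have hone : μ oneUCb = ((μ oneUCb).re : ℂ) :=
    eq_re_of_ofReal_le (ofReal_zero ▸ hμ.one_nonneg)
  have hμb : μ b = (((2 * t)⁻¹ * ((μ oneUCb).re - (fourierTransform μ (f - g)).re)
      + t * (μ oneUCb).re : ℝ) : ℂ) := by
    simp only [b, map_add, map_smul, map_sub, hμ.apply_re, smul_eq_mul]
    rw [hone]
    push_cast
    rfl
  have hle := hμ.norm_apply_le hb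
  rwa [hμb, map_sub, real_le_real] at hle

lemma uniformContinuous_fourierTransform (hμ : IsPositiveFunctional μ)
    (h0 : ContinuousAt (fun f => (fourierTransform μ f).re) 0) :
    UniformContinuous (fourierTransform μ) := by
  set m := (μ oneUCb).re
  have hm : 0 ≤ m := (nonneg_iff.1 hμ.one_nonneg).1
  rw [UniformContinuous, Metric.uniformity_basis_dist.tendsto_right_iff]
  intro ε hε
  obtain ⟨t, ht, htε⟩ : ∃ t > 0, t * m < ε := ⟨ε / (m + 1), by positivity, by
    rw [div_mul_eq_mul_div, div_lt_iff₀ (by positivity)]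
    nlinarith⟩
  have hlim : Tendsto (fun p : UCdual X × UCdual X =>
      (2 * t)⁻¹ * (m - (fourierTransform μ (p.1 - p.2)).re) + t * m) (𝓤 (UCdual X))
      (𝓝 (t * m)) := by
    have hre : Tendsto (fun p : UCdual X × UCdual X => (fourierTransform μ (p.1 - p.2)).re)
        (𝓤 (UCdual X)) (𝓝 m) := by
      simpa only [fourierTransform_zero, Function.comp_def] using
        h0.tendsto.comp UCdual.tendsto_sub_uniformity
    simpa using ((tendsto_const_nhds (x := m)).sub hre).const_mul (2 * t)⁻¹ |>.add_const (t * m)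
  filter_upwards [hlim.eventually (gt_mem_nhds htε)] with p hp
  rw [dist_eq_norm]
  exact (hμ.norm_fourierTransform_sub_le p.1 p.2 ht).trans_lt hp

end IsPositiveFunctional

end FourierTransform

theorem fourier_uniformContinuous_iff_re_continuousAt_zero_general
    {X : Type*} [UniformSpace X]
    (μ : UCb X →L[ℂ] ℂ) (hμ : IsPositiveFunctional μ) :
    (UniformContinuous (fun f : UCdual X => μ (expICf f.2)) ∧
      ∃ C : ℝ, ∀ f : UCdual X, ‖μ (expICf f.2)‖ ≤ C) ↔
    ContinuousAt (fun f : UCdual X => (μ (expICf f.2)).re)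
      (⟨fun _ => 0, uniformContinuous_const⟩ : UCdual X) :=
  ⟨fun h => (continuous_re.comp h.1.continuous).continuousAt,
    fun h0 => ⟨hμ.uniformContinuous_fourierTransform h0, ‖μ‖, norm_fourierTransform_le μ⟩⟩

/-- For a positive functional `μ ∈ M⁺(X)`, the Fourier transform
`Fμ : X^∇ → ℂ`, `(Fμ)(f) = ⟨μ, e^{if}⟩`, is a bounded uniformly continuous function on
`X^∇` if and only if its real part is continuous at `0 ∈ X^∇`. -/
theorem fourier_uniformContinuous_iff_re_continuousAt_zero
    {X : Type*} [UniformSpace X] [T2Space X]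
    (μ : UCb X →L[ℂ] ℂ) (hμ : IsPositiveFunctional μ) :
    (UniformContinuous (fun f : UCdual X => μ (expICf f.2)) ∧
      ∃ C : ℝ, ∀ f : UCdual X, ‖μ (expICf f.2)‖ ≤ C) ↔
    ContinuousAt (fun f : UCdual X => (μ (expICf f.2)).re)
      (⟨fun _ => 0, uniformContinuous_const⟩ : UCdual X) :=
  fourier_uniformContinuous_iff_re_continuousAt_zero_general μ hμ

end
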